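/- arXiv:2202.00188 — 2 statements merged into one kernel-verified Lean document; each statement's English description precedes it below -/
import Mathlib

section
/- If g is a computably transparent partial multifunction on ℕ, then Weih_g ≤_m g; consequently, for all partial multifunctions f,g on ℕ with g computably transparent, f ≤_m g if and only if Weih_f ≤_m g (i.e., the operator Weih is left adjoint to the inclusion of the computably transparent partial multifunctions into all partial multifunctions, both preordered by ≤_m). -/
namespace KleeneOracle

/-- `e ∗ x`: application of the `e`-th partial computable function on ℕ. -/
def ap (e x : ℕ) : Part ℕ :=
  Nat.Partrec.Code.eval (Denumerable.ofNat Nat.Partrec.Code e) x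

/-- `e ∗ A := {e ∗ a : a ∈ A}`. -/
def apSet (e : ℕ) (A : Set ℕ) : Set ℕ := {z | ∃ a ∈ A, z ∈ ap e a}

/-- A partial multifunction on ℕ. -/
abbrev Multifun := ℕ → Part (Set ℕ)

def Transparent (U : Multifun) : Prop :=
  ∃ u : ℕ, ∀ (e x : ℕ) (A : Set ℕ), A ∈ U x → (∀ y ∈ A, (ap e y).Dom) →
    ∃ c ∈ ap u e, ∃ d ∈ ap c x, ∃ B ∈ U d, B ⊆ apSet e A

def Inflationary (U : Multifun) : Prop :=
  ∃ η : ℕ, ∀ x : ℕ, ∃ c ∈ ap η x, ∃ B ∈ U c, B ⊆ {x}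

def mcomp (g f : Multifun) : Multifun := fun x =>
  ⟨∃ A ∈ f x, ∀ y ∈ A, (g y).Dom,
   fun _ => {z | ∃ A ∈ f x, ∃ y ∈ A, ∃ B ∈ g y, z ∈ B}⟩

def Idempotent (U : Multifun) : Prop :=
  ∃ μ : ℕ, ∀ (x : ℕ) (A : Set ℕ), A ∈ mcomp U U x →
    ∃ c ∈ ap μ x, ∃ B ∈ U c, B ⊆ A

def mRed (f g : Multifun) : Prop :=
  ∃ e : ℕ, ∀ (x : ℕ) (A : Set ℕ), A ∈ f x →
    ∃ c ∈ ap e x, ∃ B ∈ g c, B ⊆ A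

def wRed (f g : Multifun) : Prop :=
  ∃ em ep : ℕ, ∀ (x : ℕ) (A : Set ℕ), A ∈ f x →
    ∃ c ∈ ap em x, ∃ B ∈ g c, ∀ y ∈ B, ∃ z ∈ ap ep (Nat.pair x y), z ∈ A

def Weih (g : Multifun) : Multifun := fun w =>
  ⟨∃ c ∈ ap w.unpair.1 w.unpair.2.unpair.2, ∃ B ∈ g c,
     ∀ y ∈ B, (ap w.unpair.2.unpair.1 (Nat.pair w.unpair.2.unpair.2 y)).Dom,
   fun _ => {z | ∃ c ∈ ap w.unpair.1 w.unpair.2.unpair.2, ∃ B ∈ g c,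
     ∃ y ∈ B, z ∈ ap w.unpair.2.unpair.1 (Nat.pair w.unpair.2.unpair.2 y)}⟩

def idsq (g : Multifun) : Multifun := fun w =>
  if w.unpair.1 = 0 then Part.some {w.unpair.2}
  else if w.unpair.1 = 1 then g w.unpair.2
  else Part.none

def pWeih (g : Multifun) : Multifun := Weih (idsq g)

def pwRed (f g : Multifun) : Prop := wRed f (idsq g)

def Med (Q : Set ℕ) : Multifun := fun e =>
  ⟨∀ a ∈ Q, (ap e a).Dom, fun _ => apSet e Q⟩

def MedRed (P Q : Set ℕ) : Prop :=
  ∃ e : ℕ, (∀ a ∈ Q, (ap e a).Dom) ∧ apSet e Q ⊆ P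

def constMF (P : Set ℕ) : Multifun := fun _ => Part.some P

def imp (p q : Set ℕ) : Set ℕ := {e | ∀ x ∈ p, ∃ z ∈ ap e x, z ∈ q}

def OpMonotone (j : Set ℕ → Set ℕ) : Prop :=
  ∃ u : ℕ, ∀ p q : Set ℕ, ∀ a ∈ imp p q, ∃ c ∈ ap u a, c ∈ imp (j p) (j q)

def OpInflationary (j : Set ℕ → Set ℕ) : Prop :=
  ∃ e : ℕ, ∀ p : Set ℕ, e ∈ imp p (j p)

def OpIdempotent (j : Set ℕ → Set ℕ) : Prop :=
  ∃ e : ℕ, ∀ p : Set ℕ, e ∈ imp (j (j p)) (j p)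

def LawvereTierney (j : Set ℕ → Set ℕ) : Prop :=
  OpMonotone j ∧ OpInflationary j ∧ OpIdempotent j

def jU (U : Multifun) (p : Set ℕ) : Set ℕ := {x | ∃ A ∈ U x, A ⊆ p}

def SingleValued (U : Multifun) : Prop := ∀ x : ℕ, ∀ A ∈ U x, ∃ y : ℕ, A = {y}

def presInter (j : Set ℕ → Set ℕ) : Prop :=
  ∀ (ι : Type) [Nonempty ι] (p : ι → Set ℕ), j (⋂ i, p i) = ⋂ i, j (p i)

def presUnion (j : Set ℕ → Set ℕ) : Prop :=
  ∀ (ι : Type) (p : ι → Set ℕ), j (⋃ i, p i) = ⋃ i, j (p i)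

def Uop (j : Set ℕ → Set ℕ) : Multifun := fun x =>
  ⟨∃ p : Set ℕ, x ∈ j p, fun _ => ⋂₀ {p : Set ℕ | x ∈ j p}⟩

def mMorphism (e : ℕ) (f g : Multifun) : Prop :=
  ∀ (x : ℕ) (A : Set ℕ), A ∈ f x → ∃ c ∈ ap e x, ∃ B ∈ g c, B ⊆ A

def rMorphism (e : ℕ) (j k : Set ℕ → Set ℕ) : Prop :=
  ∀ p : Set ℕ, e ∈ imp (j p) (k p)

def rRed (j k : Set ℕ → Set ℕ) : Prop := ∃ e : ℕ, rMorphism e j k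

/-!
An instance `⟨h, k, x⟩` of `Weih g` asks for `k ∗ ⟨x, y⟩` for some answer `y ∈ g (h ∗ x)`.
If `g` is transparent via `u`, let `s k x` be an index of `y ↦ k ∗ ⟨x, y⟩` (s-m-n); then
`(u ∗ s k x) ∗ (h ∗ x)` is a `g`-instance all of whose answers solve the `Weih g`-instance,
so `Weih g ≤_m g`. The adjunction follows because `f ≤_m Weih f` (take `h` the identity and
`k` the projection `⟨x, y⟩ ↦ y`), `Weih` is monotone (compose the reduction into `h`), and
`≤_m` is transitive.
-/
open Nat.Partrec (Code)

lemma partrec₂_ap : Partrec₂ ap :=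
  Code.eval_part.comp ((Computable.ofNat Code).comp Computable.fst) Computable.snd

lemma exists_ap_eq {f : ℕ →. ℕ} (hf : Partrec f) : ∃ e, ∀ x, ap e x = f x := by
  obtain ⟨c, hc⟩ := Code.exists_code.1 (Partrec.nat_iff.1 hf)
  exact ⟨Encodable.encode c, fun x => by simp [ap, hc]⟩

lemma exists_ap_eq_some {f : ℕ → ℕ} (hf : Computable f) :
    ∃ e, ∀ x, ap e x = Part.some (f x) :=
  exists_ap_eq hf

lemma exists_computable_curry :
    ∃ s : ℕ → ℕ → ℕ, Computable₂ s ∧ ∀ k x y, ap (s k x) y = ap k (Nat.pair x y) :=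
  ⟨fun k x => Encodable.encode (Code.curry (Denumerable.ofNat Code k) x),
    Computable.encode.comp <| Code.primrec₂_curry.to_comp.comp
      ((Computable.ofNat Code).comp Computable.fst) Computable.snd,
    fun k x y => by simp [ap, Code.eval_curry]⟩

lemma mRed_of_partrec {f g : Multifun} {F : ℕ →. ℕ} (hF : Partrec F)
    (hFfg : ∀ x, ∀ A ∈ f x, ∃ c ∈ F x, ∃ B ∈ g c, B ⊆ A) : mRed f g := by
  obtain ⟨e, he⟩ := exists_ap_eq hF
  exact ⟨e, fun x A hA => by simpa only [he] using hFfg x A hA⟩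

lemma mRed_trans {f g h : Multifun} (hfg : mRed f g) (hgh : mRed g h) : mRed f h := by
  obtain ⟨e₁, he₁⟩ := hfg
  obtain ⟨e₂, he₂⟩ := hgh
  refine mRed_of_partrec (F := fun x => (ap e₁ x).bind (ap e₂))
    (partrec₂_ap.comp (Computable.const e₁) Computable.id |>.bind
      (partrec₂_ap.comp (Computable.const e₂) Computable.snd)) fun x A hA => ?_
  obtain ⟨c, hc, B, hB, hBA⟩ := he₁ x A hA
  obtain ⟨d, hd, C, hC, hCB⟩ := he₂ c B hB
  exact ⟨d, Part.mem_bind_iff.2 ⟨c, hc, hd⟩, C, hC, hCB.trans hBA⟩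

lemma mem_Weih_pair {g : Multifun} {h k x : ℕ} {A : Set ℕ} :
    A ∈ Weih g (Nat.pair h (Nat.pair k x)) ↔
      (∃ c ∈ ap h x, ∃ B ∈ g c, ∀ y ∈ B, (ap k (Nat.pair x y)).Dom) ∧
      {z | ∃ c ∈ ap h x, ∃ B ∈ g c, ∃ y ∈ B, z ∈ ap k (Nat.pair x y)} = A := by
  simp only [Weih, Nat.unpair_pair, Part.mem_mk_iff, exists_prop]

lemma exists_mem_Weih_pair_subset {g : Multifun} {h k x c : ℕ} {B S : Set ℕ}
    (hc : c ∈ ap h x) (hB : B ∈ g c) (hk : ∀ y ∈ B, (ap k (Nat.pair x y)).Dom)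
    (hS : ∀ y ∈ B, ∀ z ∈ ap k (Nat.pair x y), z ∈ S) :
    ∃ A ∈ Weih g (Nat.pair h (Nat.pair k x)), A ⊆ S := by
  refine ⟨_, mem_Weih_pair.2 ⟨⟨c, hc, B, hB, hk⟩, rfl⟩, ?_⟩
  rintro z ⟨c', hc', B', hB', y, hy, hz⟩
  obtain rfl := Part.mem_unique hc' hc
  obtain rfl := Part.mem_unique hB' hB
  exact hS y hy z hz

lemma mRed_Weih_of_partrec {f g : Multifun} {F : ℕ × ℕ × ℕ →. ℕ} (hF : Partrec F)
    (hFfg : ∀ h k x, ∀ A ∈ Weih f (Nat.pair h (Nat.pair k x)),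
      ∃ c ∈ F (h, k, x), ∃ B ∈ g c, B ⊆ A) :
    mRed (Weih f) g := by
  have hunpair :
      Computable fun w : ℕ => (w.unpair.1, w.unpair.2.unpair.1, w.unpair.2.unpair.2) :=
    (Primrec.pair (Primrec.fst.comp Primrec.unpair) <| Primrec.unpair.comp <|
      Primrec.snd.comp Primrec.unpair).to_comp
  refine mRed_of_partrec (hF.comp hunpair) fun w A hA => ?_
  rw [← Nat.pair_unpair w, ← Nat.pair_unpair w.unpair.2] at hA
  exact hFfg _ _ _ A hA

lemma mRed_Weih {f : Multifun} : mRed f (Weih f) := by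
  obtain ⟨h₀, hh₀⟩ := exists_ap_eq_some Computable.id
  obtain ⟨k₀, hk₀⟩ := exists_ap_eq_some (Primrec.snd.comp Primrec.unpair).to_comp
  refine mRed_of_partrec (F := fun x => Part.some (Nat.pair h₀ (Nat.pair k₀ x)))
    (Primrec₂.natPair.comp (Primrec.const h₀)
      (Primrec₂.natPair.comp (Primrec.const k₀) Primrec.id)).to_comp fun x A hA => ?_
  obtain ⟨B, hB, hBA⟩ := exists_mem_Weih_pair_subset (h := h₀) (k := k₀) (x := x) (c := x)
    (by simp [hh₀]) hA (fun y _ => by simp [hk₀]) fun y hy z hz => by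
      obtain rfl : z = y := by simpa [hk₀] using hz
      exact hy
  exact ⟨_, Part.mem_some _, B, hB, hBA⟩

lemma Weih_mono {f g : Multifun} (hfg : mRed f g) : mRed (Weih f) (Weih g) := by
  obtain ⟨e, he⟩ := hfg
  obtain ⟨s, hs, hsap⟩ := exists_computable_curry
  -- `s c₀ h` is an index of the composite `e ∘ φ_h`
  obtain ⟨c₀, hc₀⟩ := exists_ap_eq (f := fun p => (ap p.unpair.1 p.unpair.2).bind (ap e))
    (partrec₂_ap.comp (Primrec.fst.comp Primrec.unpair).to_comp
      (Primrec.snd.comp Primrec.unpair).to_comp |>.bind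
        (partrec₂_ap.comp (Computable.const e) Computable.snd))
  refine mRed_Weih_of_partrec
    (F := fun p => Part.some (Nat.pair (s c₀ p.1) (Nat.pair p.2.1 p.2.2)))
    (Primrec₂.natPair.to_comp.comp (hs.comp (Computable.const c₀) Computable.fst)
      (Primrec₂.natPair.comp (Primrec.fst.comp Primrec.snd)
        (Primrec.snd.comp Primrec.snd)).to_comp) fun h k x A hA => ?_
  obtain ⟨⟨c, hc, B, hB, hk⟩, hA⟩ := mem_Weih_pair.1 hA
  obtain ⟨d, hd, C, hC, hCB⟩ := he c B hB
  have hdx : d ∈ ap (s c₀ h) x := by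
    rw [hsap, hc₀, Nat.unpair_pair]
    exact Part.mem_bind_iff.2 ⟨c, hc, hd⟩
  obtain ⟨D, hD, hDS⟩ := exists_mem_Weih_pair_subset (k := k) (S := A) hdx hC
    (fun y hy => hk y (hCB hy)) fun y hy z hz => hA ▸ ⟨c, hc, B, hB, y, hCB hy, hz⟩
  exact ⟨_, Part.mem_some _, D, hD, hDS⟩

lemma Transparent.mRed_Weih {g : Multifun} (hg : Transparent g) : mRed (Weih g) g := by
  obtain ⟨u, hu⟩ := hg
  obtain ⟨s, hs, hsap⟩ := exists_computable_curry
  refine mRed_Weih_of_partrec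
    (F := fun p => (ap p.1 p.2.2).bind fun c =>
      (ap u (s p.2.1 p.2.2)).bind fun c₁ => ap c₁ c)
    ?_ fun h k x A hA => ?_
  · refine (partrec₂_ap.comp Computable.fst (Computable.snd.comp Computable.snd)).bind ?_
    refine Partrec.to₂ <| Partrec.bind (α := (ℕ × ℕ × ℕ) × ℕ)
      (f := fun q => ap u (s q.1.2.1 q.1.2.2)) (g := fun q c₁ => ap c₁ q.2) ?_ ?_
    · exact partrec₂_ap.comp (Computable.const u) <| hs.comp
        (Computable.fst.comp (Computable.snd.comp Computable.fst))
        (Computable.snd.comp (Computable.snd.comp Computable.fst))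
    · exact partrec₂_ap.comp Computable.snd (Computable.snd.comp Computable.fst)
  obtain ⟨⟨c, hc, B, hB, hk⟩, rfl⟩ := mem_Weih_pair.1 hA
  obtain ⟨c₁, hc₁, d, hd, C, hC, hCB⟩ := hu (s k x) c B hB fun y hy => by
    rw [hsap]; exact hk y hy
  refine ⟨d, Part.mem_bind_iff.2 ⟨c, hc, Part.mem_bind_iff.2 ⟨c₁, hc₁, hd⟩⟩, C, hC, ?_⟩
  rintro z hz
  obtain ⟨y, hy, hzy⟩ := hCB hz
  exact ⟨c, hc, B, hB, y, hy, by rwa [hsap] at hzy⟩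

/-- If `g` is computably transparent then `Weih g ≤_m g`; consequently,
for all `f g` with `g` computably transparent, `f ≤_m g ↔ Weih f ≤_m g`
(`Weih` is left adjoint to the inclusion of the computably transparent
partial multifunctions, both preordered by `≤_m`). -/
theorem weih_left_adjoint :
    (∀ g : Multifun, Transparent g → mRed (Weih g) g) ∧
    (∀ f g : Multifun, Transparent g → (mRed f g ↔ mRed (Weih f) g)) :=
  ⟨fun _ hg => hg.mRed_Weih, fun f g hg =>
    ⟨fun hfg => mRed_trans (Weih_mono hfg) hg.mRed_Weih, mRed_trans mRed_Weih⟩⟩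

end KleeneOracle
end

section
/- For all partial multifunctions f,g on ℕ with g computably transparent and inflationary, f ≤_m g if and only if f ≤_pW g. Moreover, every partial multifunction f satisfies f ≤_pW pWeih(f) and pWeih(f) ≤_pW f, and pWeih(f) is computably transparent and inflationary. Hence the poset of many-one degrees of computably transparent, inflationary partial multifunctions on ℕ is isomorphic to the pointed Weihrauch degrees. -/
/-!
A Weihrauch reduction `(φ₋, φ₊)` of `f` to `g` is itself an input `⟨φ₋, φ₊, x⟩` of `Weih g`, so
`f ≤_W g` turns into `f ≤_m Weih g`, while `Weih g ≤_W g` holds by running the triple. For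
`f ≤_pW g ⇒ f ≤_m g` it then suffices that `pWeih g ≤_m g`: the identity branch of `id ⊔ g` is
absorbed by inflationarity and the post-processing `φ₊` of the `g` branch by transparency.
`Weih g` is transparent because post-composing with `e` only changes the `k` of a triple, and
inflationary as soon as `g` has a single defined value.
-/

namespace KleeneOracle

open Nat.Partrec (Code)

def apComp (e k : ℕ) : ℕ :=
  Encodable.encode ((Denumerable.ofNat Code e).comp (Denumerable.ofNat Code k))

def apCurry (k x : ℕ) : ℕ := Encodable.encode ((Denumerable.ofNat Code k).curry x)

lemma ap_apComp (e k y : ℕ) : ap (apComp e k) y = (ap k y).bind (ap e) := by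
  simp only [ap, apComp, Denumerable.ofNat_encode, Code.eval]
  rfl

lemma ap_apCurry (k x y : ℕ) : ap (apCurry k x) y = ap k (Nat.pair x y) := by
  simp [ap, apCurry, Code.eval_curry]

lemma computable₂_apComp : Computable₂ apComp :=
  (Primrec.encode.comp (Code.primrec₂_comp.comp ((Primrec.ofNat Code).comp Primrec.fst)
    ((Primrec.ofNat Code).comp Primrec.snd))).to_comp

lemma computable₂_apCurry : Computable₂ apCurry :=
  (Primrec.encode.comp (Code.primrec₂_curry.comp ((Primrec.ofNat Code).comp Primrec.fst)
    Primrec.snd)).to_comp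

lemma computable_unpair_fst : Computable fun n : ℕ => n.unpair.1 :=
  Computable.fst.comp Computable.unpair

lemma computable_unpair_snd : Computable fun n : ℕ => n.unpair.2 :=
  Computable.snd.comp Computable.unpair

lemma exists_index {F : ℕ →. ℕ} (hF : Partrec F) : ∃ e : ℕ, ∀ x, ap e x = F x := by
  obtain ⟨c, hc⟩ := Code.exists_code.1 (Partrec.nat_iff.1 hF)
  exact ⟨Encodable.encode c, fun x => by simp [ap, hc]⟩

lemma exists_eq_pair_pair (w : ℕ) : ∃ h k x : ℕ, w = Nat.pair h (Nat.pair k x) :=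
  ⟨w.unpair.1, w.unpair.2.unpair.1, w.unpair.2.unpair.2, by simp⟩

lemma mem_weih {g : Multifun} {h k x : ℕ} {A : Set ℕ} :
    A ∈ Weih g (Nat.pair h (Nat.pair k x)) ↔
      (∃ c ∈ ap h x, ∃ B ∈ g c, ∀ y ∈ B, (ap k (Nat.pair x y)).Dom) ∧
      A = {z | ∃ c ∈ ap h x, ∃ B ∈ g c, ∃ y ∈ B, z ∈ ap k (Nat.pair x y)} := by
  simp only [Weih, Nat.unpair_pair, Part.mem_mk_iff, exists_prop]
  exact and_congr_right fun _ => eq_comm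

lemma mem_idsq {g : Multifun} {c : ℕ} {B : Set ℕ} :
    B ∈ idsq g c ↔ ∃ a, (c = Nat.pair 0 a ∧ B = {a}) ∨ (c = Nat.pair 1 a ∧ B ∈ g a) := by
  obtain ⟨i, a, rfl⟩ : ∃ i a, c = Nat.pair i a := ⟨c.unpair.1, c.unpair.2, by simp⟩
  rcases i with _ | _ | i <;> simp [idsq, eq_comm]

lemma mRed_refl (f : Multifun) : mRed f f := by
  obtain ⟨e, he⟩ := exists_index Partrec.some
  exact ⟨e, fun x A hA => ⟨x, by simp [he], A, hA, subset_rfl⟩⟩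

lemma mRed.trans {f g h : Multifun} : mRed f g → mRed g h → mRed f h := by
  rintro ⟨e₁, he₁⟩ ⟨e₂, he₂⟩
  refine ⟨apComp e₂ e₁, fun x A hA => ?_⟩
  obtain ⟨c, hc, B, hB, hBA⟩ := he₁ x A hA
  obtain ⟨d, hd, C, hC, hCB⟩ := he₂ c B hB
  exact ⟨d, by rw [ap_apComp]; exact Part.mem_bind hc hd, C, hC, hCB.trans hBA⟩

lemma pwRed_of_mRed {f g : Multifun} (h : mRed f g) : pwRed f g := by
  obtain ⟨e, he⟩ := h
  obtain ⟨em, hem⟩ := exists_index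
    ((partrec₂_ap.comp (Computable.const e) Computable.id).map
      (Primrec₂.natPair.comp (Primrec.const 1) Primrec.snd).to_comp.to₂)
  obtain ⟨ep, hep⟩ := exists_index computable_unpair_snd.partrec
  refine ⟨em, ep, fun x A hA => ?_⟩
  obtain ⟨c, hc, B, hB, hBA⟩ := he x A hA
  exact ⟨Nat.pair 1 c, by rw [hem]; exact Part.mem_map _ hc, B, mem_idsq.2 ⟨c, .inr ⟨rfl, hB⟩⟩,
    fun y hy => ⟨y, by simp [hep], hBA hy⟩⟩

lemma mRed_weih_of_wRed {f g : Multifun} (h : wRed f g) : mRed f (Weih g) := by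
  obtain ⟨em, ep, hred⟩ := h
  obtain ⟨e, he⟩ := exists_index (F := fun x => Part.some (Nat.pair em (Nat.pair ep x)))
    (Primrec₂.natPair.comp (Primrec.const em)
      (Primrec₂.natPair.comp (Primrec.const ep) Primrec.id)).to_comp.partrec
  refine ⟨e, fun x A hA =>
    ⟨Nat.pair em (Nat.pair ep x), by simp [he], _, mem_weih.2 ⟨?_, rfl⟩, ?_⟩⟩
  all_goals obtain ⟨c, hc, B, hB, hBA⟩ := hred x A hA
  · exact ⟨c, hc, B, hB, fun y hy =>
      let ⟨_, hz, _⟩ := hBA y hy; Part.dom_iff_mem.2 ⟨_, hz⟩⟩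
  · rintro z ⟨c', hc', B', hB', y, hy, hz⟩
    obtain rfl := Part.mem_unique hc' hc
    obtain rfl := Part.mem_unique hB' hB
    obtain ⟨z', hz', hz'A⟩ := hBA y hy
    rwa [Part.mem_unique hz hz']

lemma wRed_weih_self (g : Multifun) : wRed (Weih g) g := by
  have π₁ := computable_unpair_fst
  have π₂ := computable_unpair_snd
  obtain ⟨em, hem⟩ := exists_index (F := fun w => ap w.unpair.1 w.unpair.2.unpair.2)
    (partrec₂_ap.comp π₁ (π₂.comp π₂))
  obtain ⟨ep, hep⟩ := exists_index (F := fun p =>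
      ap p.unpair.1.unpair.2.unpair.1 (Nat.pair p.unpair.1.unpair.2.unpair.2 p.unpair.2))
    (partrec₂_ap.comp (π₁.comp (π₂.comp π₁))
      (Primrec₂.natPair.to_comp.comp (π₂.comp (π₂.comp π₁)) π₂))
  refine ⟨em, ep, fun w A hA => ?_⟩
  obtain ⟨h, k, x, rfl⟩ := exists_eq_pair_pair w
  obtain ⟨⟨c, hc, B, hB, hdom⟩, rfl⟩ := mem_weih.1 hA
  refine ⟨c, by simpa [hem] using hc, B, hB, fun y hy => ?_⟩
  exact ⟨_, by simpa [hep] using Part.get_mem (hdom y hy), c, hc, B, hB, y, hy, Part.get_mem _⟩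

lemma transparent_weih (g : Multifun) : Transparent (Weih g) := by
  have π₁ := computable_unpair_fst
  have π₂ := computable_unpair_snd
  -- `(u ∗ e) ∗ ⟨h, k, x⟩ = ⟨h, e ∘ k, x⟩`
  obtain ⟨t, ht⟩ := exists_index (F := fun n => Part.some (Nat.pair n.unpair.2.unpair.1
      (Nat.pair (apComp n.unpair.1 n.unpair.2.unpair.2.unpair.1) n.unpair.2.unpair.2.unpair.2)))
    (Primrec₂.natPair.to_comp.comp (π₁.comp π₂) (Primrec₂.natPair.to_comp.comp
      (computable₂_apComp.comp π₁ (π₁.comp (π₂.comp π₂))) (π₂.comp (π₂.comp π₂)))).partrec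
  obtain ⟨u, hu⟩ := exists_index (F := fun e => Part.some (apCurry t e))
    (computable₂_apCurry.comp (Computable.const t) Computable.id).partrec
  refine ⟨u, fun e w A hA hAe => ?_⟩
  obtain ⟨h, k, x, rfl⟩ := exists_eq_pair_pair w
  obtain ⟨⟨c, hc, B, hB, hdom⟩, rfl⟩ := mem_weih.1 hA
  refine ⟨apCurry t e, by simp [hu],
    Nat.pair h (Nat.pair (apComp e k) x), by simp [ap_apCurry, ht], _,
    mem_weih.2 ⟨⟨c, hc, B, hB, fun y hy => ?_⟩, rfl⟩, ?_⟩
  · rw [ap_apComp, Part.bind_dom]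
    exact ⟨hdom y hy, hAe _ ⟨c, hc, B, hB, y, hy, Part.get_mem _⟩⟩
  · rintro z ⟨c', hc', B', hB', y, hy, hz⟩
    obtain ⟨a, ha, hza⟩ := Part.mem_bind_iff.1 ((ap_apComp e k _).symm ▸ hz)
    exact ⟨a, ⟨c', hc', B', hB', y, hy, ha⟩, hza⟩

lemma inflationary_weih_of_mem {g : Multifun} {c₀ : ℕ} {B₀ : Set ℕ} (h₀ : B₀ ∈ g c₀) :
    Inflationary (Weih g) := by
  obtain ⟨h, hh⟩ := exists_index (Computable.const c₀).partrec
  obtain ⟨k, hk⟩ := exists_index computable_unpair_fst.partrec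
  obtain ⟨η, hη⟩ := exists_index (F := fun x => Part.some (Nat.pair h (Nat.pair k x)))
    (Primrec₂.natPair.comp (Primrec.const h)
      (Primrec₂.natPair.comp (Primrec.const k) Primrec.id)).to_comp.partrec
  refine ⟨η, fun x => ⟨Nat.pair h (Nat.pair k x), by simp [hη], _, mem_weih.2 ⟨?_, rfl⟩, ?_⟩⟩
  · exact ⟨c₀, by simp [hh], B₀, h₀, fun y _ => by simp [hk]⟩
  · rintro z ⟨c, -, B, -, y, -, hz⟩
    simpa [hk] using hz

lemma exists_index_pWeih_reduction (u η : ℕ) : ∃ e : ℕ, ∀ h k x : ℕ,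
    ap e (Nat.pair h (Nat.pair k x)) = (ap h x).bind fun c =>
      if c.unpair.1 = 0 then (ap k (Nat.pair x c.unpair.2)).bind (ap η)
      else (ap u (apCurry k x)).bind fun t => ap t c.unpair.2 := by
  have π₁ := computable_unpair_fst
  have π₂ := computable_unpair_snd
  have hzero : Computable fun p : ℕ × ℕ => decide (p.2.unpair.1 = 0) :=
    (Primrec.eq.comp (Primrec.fst.comp (Primrec.unpair.comp Primrec.snd))
      (Primrec.const 0)).decide.to_comp
  have hid : Partrec fun p : ℕ × ℕ =>
      (ap p.1.unpair.2.unpair.1 (Nat.pair p.1.unpair.2.unpair.2 p.2.unpair.2)).bind (ap η) :=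
    (partrec₂_ap.comp ((π₁.comp π₂).comp Computable.fst)
      (Primrec₂.natPair.to_comp.comp ((π₂.comp π₂).comp Computable.fst)
        (π₂.comp Computable.snd))).bind
      (partrec₂_ap.comp (Computable.const η) Computable.snd).to₂
  have hg : Partrec fun p : ℕ × ℕ =>
      (ap u (apCurry p.1.unpair.2.unpair.1 p.1.unpair.2.unpair.2)).bind
        fun t => ap t p.2.unpair.2 :=
    (partrec₂_ap.comp (Computable.const u) (computable₂_apCurry.comp
      ((π₁.comp π₂).comp Computable.fst) ((π₂.comp π₂).comp Computable.fst))).bind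
      (partrec₂_ap.comp Computable.snd ((π₂.comp Computable.snd).comp Computable.fst)).to₂
  have hcases : Partrec₂ fun w c : ℕ =>
      if c.unpair.1 = 0 then
        (ap w.unpair.2.unpair.1 (Nat.pair w.unpair.2.unpair.2 c.unpair.2)).bind (ap η)
      else (ap u (apCurry w.unpair.2.unpair.1 w.unpair.2.unpair.2)).bind
        fun t => ap t c.unpair.2 :=
    (Partrec.cond hzero hid hg).of_eq fun p => by
      by_cases h : p.2.unpair.1 = 0 <;> simp [h]
  obtain ⟨e, he⟩ := exists_index ((partrec₂_ap.comp π₁ (π₂.comp π₂)).bind hcases)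
  exact ⟨e, fun h k x => by simp [he]⟩

lemma mRed_pWeih_of_transparent_of_inflationary {g : Multifun} (hT : Transparent g)
    (hI : Inflationary g) : mRed (pWeih g) g := by
  obtain ⟨u, hu⟩ := hT
  obtain ⟨η, hη⟩ := hI
  obtain ⟨e, he⟩ := exists_index_pWeih_reduction u η
  refine ⟨e, fun w A hA => ?_⟩
  obtain ⟨h, k, x, rfl⟩ := exists_eq_pair_pair w
  obtain ⟨⟨c, hc, B, hB, hdom⟩, rfl⟩ := mem_weih.1 hA
  obtain ⟨a, ⟨rfl, rfl⟩ | ⟨rfl, hBg⟩⟩ := mem_idsq.1 hB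
  · have hz := Part.get_mem (hdom a rfl)
    obtain ⟨d, hd, C, hC, hCz⟩ := hη ((ap k (Nat.pair x a)).get (hdom a rfl))
    refine ⟨d, ?_, C, hC, fun b hb => ?_⟩
    · rw [he]; exact Part.mem_bind hc (by simpa using Part.mem_bind hz hd)
    · obtain rfl := hCz hb
      exact ⟨_, hc, {a}, hB, a, rfl, hz⟩
  · have hdom' : ∀ y ∈ B, (ap (apCurry k x) y).Dom := fun y hy => by
      rw [ap_apCurry]; exact hdom y hy
    obtain ⟨t, ht, d, hd, C, hC, hCB⟩ := hu (apCurry k x) a B hBg hdom'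
    refine ⟨d, ?_, C, hC, fun b hb => ?_⟩
    · rw [he]; exact Part.mem_bind hc (by simpa using Part.mem_bind ht hd)
    · obtain ⟨y, hy, hby⟩ := hCB hb
      exact ⟨_, hc, B, hB, y, hy, by rwa [ap_apCurry] at hby⟩

/-- For `g` computably transparent and inflationary, `f ≤_m g ↔ f ≤_pW g`;
moreover `f ≡_pW pWeih f` and `pWeih f` is computably transparent and inflationary.
Hence the many-one degrees of computably transparent, inflationary partial
multifunctions are isomorphic to the pointed Weihrauch degrees. -/
theorem pointed_weihrauch_correspondence :
    (∀ f g : Multifun, Transparent g → Inflationary g → (mRed f g ↔ pwRed f g)) ∧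
    (∀ f : Multifun, pwRed f (pWeih f) ∧ pwRed (pWeih f) f ∧
      Transparent (pWeih f) ∧ Inflationary (pWeih f)) := by
  refine ⟨fun f g hT hI => ⟨pwRed_of_mRed, fun h => ?_⟩, fun f => ⟨?_, ?_, ?_, ?_⟩⟩
  · exact (mRed_weih_of_wRed h).trans (mRed_pWeih_of_transparent_of_inflationary hT hI)
  · exact pwRed_of_mRed (mRed_weih_of_wRed (pwRed_of_mRed (mRed_refl f)))
  · exact wRed_weih_self (idsq f)
  · exact transparent_weih (idsq f)
  · exact inflationary_weih_of_mem (c₀ := Nat.pair 0 0) (mem_idsq.2 ⟨0, .inl ⟨rfl, rfl⟩⟩)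

end KleeneOracle
end
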